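/- arXiv:2511.06138 — 3 statements merged into one kernel-verified Lean document; each statement's English description precedes it below -/
import Mathlib

section
/- (Tweedie's mean formula) Suppose the joint density of (z0, z_t) on R^d x R^d factors as p(z0) p_t(z_t | z0), where p_t(z_t | z0) is the Gaussian density N(alpha z0, sigma^2 I) with alpha != 0 and sigma > 0, and let p_t(z_t) denote the marginal density of z_t. Then for every z_t where p_t(z_t) > 0, E[z0 | z_t] = (1/alpha) ( z_t + sigma^2 * grad_{z_t} log p_t(z_t) ). -/
open MeasureTheory Real

theorem gauss_grad {d : ℕ} (sigma C : ℝ) (c zt : EuclideanSpace ℝ (Fin d)) :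
    HasGradientAt (fun z => C * Real.exp (-‖z - c‖ ^ 2 / (2 * sigma ^ 2)))
      (((sigma ^ 2)⁻¹ * (C * Real.exp (-‖zt - c‖ ^ 2 / (2 * sigma ^ 2)))) • (c - zt)) zt := by
  have h1 : HasFDerivAt (fun z : EuclideanSpace ℝ (Fin d) => z - c)
      (ContinuousLinearMap.id ℝ _) zt := (hasFDerivAt_id zt).sub_const c
  have h2 := (h1.inner ℝ h1)
  have h3 : HasDerivAt (fun t : ℝ => C * Real.exp (-t / (2 * sigma ^ 2)))
      (C * (Real.exp (-‖zt - c‖^2 / (2 * sigma ^ 2)) * (-(2 * sigma ^ 2)⁻¹)))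
      (inner ℝ (zt - c) (zt - c) : ℝ) := by
    rw [real_inner_self_eq_norm_sq]
    have := ((Real.hasDerivAt_exp (-‖zt - c‖^2 / (2 * sigma ^ 2))).comp (‖zt - c‖^2)
      (((hasDerivAt_id (‖zt - c‖^2)).neg).div_const (2 * sigma ^ 2))).const_mul C
    simpa [neg_div] using this
  have h4 := h3.comp_hasFDerivAt zt h2
  have h5 : HasFDerivAt (fun z : EuclideanSpace ℝ (Fin d) =>
      C * Real.exp (-‖z - c‖ ^ 2 / (2 * sigma ^ 2)))
      ((C * (Real.exp (-‖zt - c‖^2 / (2 * sigma ^ 2)) * (-(2 * sigma ^ 2)⁻¹))) •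
        ((fderivInnerCLM ℝ (zt - c, zt - c)).comp
          ((ContinuousLinearMap.id ℝ _).prod (ContinuousLinearMap.id ℝ _)))) zt := by
    have h4' := h4
    simp only [Function.comp_def, real_inner_self_eq_norm_sq] at h4'
    exact h4'
  rw [hasGradientAt_iff_hasFDerivAt]
  refine h5.congr_fderiv ?_
  ext v
  simp only [InnerProductSpace.toDual_apply_apply, ContinuousLinearMap.smul_apply,
    ContinuousLinearMap.coe_comp', Function.comp_apply, ContinuousLinearMap.prod_apply,
    ContinuousLinearMap.coe_id', id_eq, fderivInnerCLM_apply, smul_eq_mul,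
    real_inner_smul_left, inner_sub_left, inner_sub_right]
  rw [real_inner_comm v zt, real_inner_comm v c]
  ring

/-- Tweedie's mean formula: if the joint density of `(z0, z_t)` factors as
`p(z0) p_t(z_t|z0)` with Gaussian channel `p_t(z_t|z0) = N(α z0, σ² I)`, `α ≠ 0`, `σ > 0`,
and `p_t` denotes the marginal density, then wherever `p_t(z_t) > 0` (and with enough
regularity to differentiate under the integral sign, encoded by `hG`, `hGeq`),
`E[z0 | z_t] = (1/α)(z_t + σ² ∇ log p_t(z_t))`. -/
theorem stmt2 {d : ℕ} (alpha sigma : ℝ) (hα : alpha ≠ 0) (hσ : 0 < sigma)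
    (p : EuclideanSpace ℝ (Fin d) → ℝ) (hp : ∀ z, 0 ≤ p z)
    (hpint : ∫ z, p z = 1)
    (g : EuclideanSpace ℝ (Fin d) → EuclideanSpace ℝ (Fin d) → ℝ)
    (hg : ∀ z z0, g z z0 = (2 * π * sigma ^ 2) ^ (-(d : ℝ) / 2) *
        Real.exp (-‖z - alpha • z0‖ ^ 2 / (2 * sigma ^ 2)))
    (pt : EuclideanSpace ℝ (Fin d) → ℝ)
    (hpt : ∀ z, pt z = ∫ z0, p z0 * g z z0)
    (zt : EuclideanSpace ℝ (Fin d))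
    (hpos : 0 < pt zt)
    (hint1 : Integrable (fun z0 => p z0 * g zt z0))
    (hint2 : Integrable (fun z0 => (p z0 * g zt z0) • z0))
    (G : EuclideanSpace ℝ (Fin d))
    (hG : HasGradientAt pt G zt)
    (hGeq : G = ∫ z0, p z0 • gradient (fun z => g z z0) zt) :
    (pt zt)⁻¹ • (∫ z0, (p z0 * g zt z0) • z0)
      = alpha⁻¹ • (zt + sigma ^ 2 • gradient (fun z => Real.log (pt z)) zt) := by
  have hσ2 : (sigma : ℝ) ^ 2 ≠ 0 := pow_ne_zero 2 hσ.ne'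
  set C : ℝ := (2 * π * sigma ^ 2) ^ (-(d : ℝ) / 2) with hC
  -- gradient of g
  have hgrad : ∀ z0 : EuclideanSpace ℝ (Fin d), gradient (fun z => g z z0) zt
      = ((sigma ^ 2)⁻¹ * g zt z0) • (alpha • z0 - zt) := by
    intro z0
    have h := gauss_grad sigma C (alpha • z0) zt
    have heq : (fun z : EuclideanSpace ℝ (Fin d) =>
        C * Real.exp (-‖z - alpha • z0‖ ^ 2 / (2 * sigma ^ 2))) = fun z => g z z0 := by
      funext z; rw [hg z z0]
    rw [heq] at h
    rw [h.gradient, hg zt z0]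
  -- rewrite G
  have hGeq2 : G = (sigma ^ 2)⁻¹ •
      (alpha • (∫ z0, (p z0 * g zt z0) • z0) - pt zt • zt) := by
    rw [hGeq]
    have heq2 : (fun z0 : EuclideanSpace ℝ (Fin d) => p z0 • gradient (fun z => g z z0) zt)
        = fun z0 => alpha • ((sigma ^ 2)⁻¹ • ((p z0 * g zt z0) • z0))
            - (sigma ^ 2)⁻¹ • ((p z0 * g zt z0) • zt) := by
      funext z0
      rw [hgrad z0]
      module
    rw [heq2]
    have ha : Integrable (fun z0 : EuclideanSpace ℝ (Fin d) =>
        alpha • ((sigma ^ 2)⁻¹ • ((p z0 * g zt z0) • z0))) := (hint2.smul ((sigma ^ 2)⁻¹)).smul alpha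
    have hb : Integrable (fun z0 : EuclideanSpace ℝ (Fin d) =>
        (sigma ^ 2)⁻¹ • ((p z0 * g zt z0) • zt)) := (hint1.smul_const zt).smul ((sigma ^ 2)⁻¹)
    rw [integral_sub ha hb, integral_smul, integral_smul, integral_smul, integral_smul_const,
      hpt zt]
    module
  -- gradient of log pt
  have hlog : gradient (fun z => Real.log (pt z)) zt = (pt zt)⁻¹ • G := by
    have hd : HasDerivAt Real.log (pt zt)⁻¹ (pt zt) := Real.hasDerivAt_log hpos.ne'
    have h : HasFDerivAt (fun z => Real.log (pt z)) _ zt := hd.comp_hasFDerivAt zt hG.hasFDerivAt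
    have h2 : HasGradientAt (fun z => Real.log (pt z)) ((pt zt)⁻¹ • G) zt := by
      rw [hasGradientAt_iff_hasFDerivAt]
      refine h.congr_fderiv ?_
      ext v
      simp [real_inner_smul_left]
    exact h2.gradient
  rw [hlog, hGeq2]
  match_scalars
  · field_simp
  · field_simp
    ring
end

section
/- (Tweedie's covariance formula) Under the same Gaussian-channel setup with z_t = alpha z0 + sigma eps, eps ~ N(0, I) independent of z0, the conditional covariance satisfies Cov[z0 | z_t] = (sigma^2 / alpha^2) ( I + sigma^2 * Hessian_{z_t} log p_t(z_t) ), where p_t is the marginal density of z_t. -/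
open MeasureTheory Real

section Aux

variable {d : ℕ}

local notation "E" => EuclideanSpace ℝ (Fin d)

lemma gauss_hasFDerivAt (c s : ℝ) (a w : E) :
    HasFDerivAt (fun w' : E => c * Real.exp (-‖w' - a‖ ^ 2 / (2 * s ^ 2)))
      (((c * Real.exp (-‖w - a‖ ^ 2 / (2 * s ^ 2))) * (-(s ^ 2)⁻¹)) • (innerSL ℝ (w - a))) w := by
  have h1 : HasFDerivAt (fun w' : E => w' - a) (ContinuousLinearMap.id ℝ E) w :=
    (hasFDerivAt_id w).sub_const a
  have h2 : HasFDerivAt (fun w' : E => -‖w' - a‖ ^ 2 / (2 * s ^ 2))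
      ((-(2 * s ^ 2)⁻¹) • (2 • (innerSL ℝ (w - a)).comp (ContinuousLinearMap.id ℝ E))) w := by
    have h2' := h1.norm_sq.const_mul (-(2 * s ^ 2)⁻¹)
    have heq : (fun w' : E => -‖w' - a‖ ^ 2 / (2 * s ^ 2))
        = fun w' : E => (-(2 * s ^ 2)⁻¹) * ‖w' - a‖ ^ 2 := by
      funext x; ring
    rw [heq]; exact h2'
  have h4 := (h2.exp).const_mul c
  refine h4.congr_fderiv ?_
  ext v
  simp only [ContinuousLinearMap.smul_apply, ContinuousLinearMap.coe_smul', Pi.smul_apply,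
    ContinuousLinearMap.coe_comp', Function.comp_apply, ContinuousLinearMap.coe_id', id_eq,
    smul_eq_mul]
  ring

end Aux

/-- Tweedie's covariance formula: under the Gaussian channel
`z_t = α z0 + σ ε`, `ε ~ N(0,I)` independent of `z0` (with density `p`), the conditional
covariance satisfies `Cov[z0 | z_t] = (σ²/α²)(I + σ² ∇² log p_t(z_t))`, stated entrywise
with the posterior moments written as integrals against the posterior density
`p(z0) g(z_t, z0) / p_t(z_t)`.  Regularity (differentiation under the integral sign and
smoothness of `p_t`) is encoded by the hypotheses `hsm`, `hder1`, `hder2`. -/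
theorem stmt3 {d : ℕ} (alpha sigma : ℝ) (hα : alpha ≠ 0) (hσ : 0 < sigma)
    (p : EuclideanSpace ℝ (Fin d) → ℝ) (hp : ∀ z, 0 ≤ p z)
    (hpint : ∫ z, p z = 1)
    (g : EuclideanSpace ℝ (Fin d) → EuclideanSpace ℝ (Fin d) → ℝ)
    (hg : ∀ z z0, g z z0 = (2 * π * sigma ^ 2) ^ (-(d : ℝ) / 2) *
        Real.exp (-‖z - alpha • z0‖ ^ 2 / (2 * sigma ^ 2)))
    (pt : EuclideanSpace ℝ (Fin d) → ℝ)
    (hpt : ∀ z, pt z = ∫ z0, p z0 * g z z0)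
    (hpos : ∀ z, 0 < pt z)
    (hsm : ContDiff ℝ 2 pt)
    (hder1 : ∀ z v, fderiv ℝ pt z v = ∫ z0, p z0 * fderiv ℝ (fun w => g w z0) z v)
    (hder2 : ∀ z v u, fderiv ℝ (fun w => fderiv ℝ pt w v) z u
        = ∫ z0, p z0 * fderiv ℝ (fun w => fderiv ℝ (fun w' => g w' z0) w v) z u)
    (zt : EuclideanSpace ℝ (Fin d))
    (hmom1 : ∀ i : Fin d, Integrable (fun z0 => (p z0 * g zt z0) * z0 i))
    (hmom2 : ∀ i j : Fin d, Integrable (fun z0 => (p z0 * g zt z0) * (z0 i * z0 j))) :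
    ∀ i j : Fin d,
      (pt zt)⁻¹ * (∫ z0, (p z0 * g zt z0) * (z0 i * z0 j))
        - ((pt zt)⁻¹ * ∫ z0, (p z0 * g zt z0) * z0 i)
          * ((pt zt)⁻¹ * ∫ z0, (p z0 * g zt z0) * z0 j)
      = (sigma ^ 2 / alpha ^ 2) *
          ((if i = j then 1 else 0) +
            sigma ^ 2 *
              fderiv ℝ (fun w => fderiv ℝ (fun w' => Real.log (pt w')) w
                  (EuclideanSpace.single j 1)) zt (EuclideanSpace.single i 1)) := by
  intro i j
  have hσ2 : (sigma : ℝ) ^ 2 ≠ 0 := pow_ne_zero 2 (ne_of_gt hσ)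
  set c : ℝ := (2 * π * sigma ^ 2) ^ (-(d : ℝ) / 2) with hc
  -- derivative of the Gaussian kernel
  have hG : ∀ z0 w : EuclideanSpace ℝ (Fin d), HasFDerivAt (fun w' => g w' z0)
      ((g w z0 * (-(sigma ^ 2)⁻¹)) • (innerSL ℝ (w - alpha • z0))) w := by
    intro z0 w
    have heq : (fun w' => g w' z0)
        = fun w' => c * Real.exp (-‖w' - alpha • z0‖ ^ 2 / (2 * sigma ^ 2)) :=
      funext fun w' => hg w' z0
    rw [heq, hg w z0]
    exact gauss_hasFDerivAt c sigma (alpha • z0) w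
  have hGapp : ∀ (z0 w : EuclideanSpace ℝ (Fin d)) (k : Fin d),
      fderiv ℝ (fun w' => g w' z0) w (EuclideanSpace.single k 1)
        = g w z0 * ((alpha * z0 k - w k) / sigma ^ 2) := by
    intro z0 w k
    rw [(hG z0 w).fderiv]
    simp only [ContinuousLinearMap.smul_apply, innerSL_apply_apply, smul_eq_mul]
    rw [show (inner ℝ (w - alpha • z0) (EuclideanSpace.single k (1:ℝ)) : ℝ)
        = (w - alpha • z0) k by
      rw [EuclideanSpace.inner_single_right]; simp]
    simp only [PiLp.sub_apply, PiLp.smul_apply, smul_eq_mul]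
    field_simp
    ring
  -- integrability of p * g
  have hPg : Integrable (fun z0 => p z0 * g zt z0) := by
    by_contra hn
    have h1 : (0 : ℝ) < ∫ z0, p z0 * g zt z0 := (hpt zt) ▸ hpos zt
    rw [integral_undef hn] at h1
    exact lt_irrefl 0 h1
  set P : ℝ := pt zt with hP
  set A : ℝ := ∫ z0, (p z0 * g zt z0) * z0 i with hA
  set B : ℝ := ∫ z0, (p z0 * g zt z0) * z0 j with hB
  set C : ℝ := ∫ z0, (p z0 * g zt z0) * (z0 i * z0 j) with hC
  have hPpos : 0 < P := hpos zt
  have hPne : P ≠ 0 := ne_of_gt hPpos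
  -- first derivatives of pt
  have hD1 : ∀ k : Fin d, fderiv ℝ pt zt (EuclideanSpace.single k 1)
      = (alpha * (∫ z0, (p z0 * g zt z0) * z0 k) - zt k * P) / sigma ^ 2 := by
    intro k
    rw [hder1]
    have heq : (fun z0 => p z0 * fderiv ℝ (fun w => g w z0) zt (EuclideanSpace.single k 1))
        = fun z0 => (alpha / sigma ^ 2) * ((p z0 * g zt z0) * z0 k)
            - (zt k / sigma ^ 2) * (p z0 * g zt z0) := by
      funext z0; rw [hGapp]; ring
    rw [heq, integral_sub ((hmom1 k).const_mul _) (hPg.const_mul _),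
      integral_const_mul, integral_const_mul, hP, hpt zt]
    ring
  -- second derivative of the kernel
  have hFval : ∀ z0 : EuclideanSpace ℝ (Fin d),
      fderiv ℝ (fun w => fderiv ℝ (fun w' => g w' z0) w (EuclideanSpace.single j 1)) zt
        (EuclideanSpace.single i 1)
      = g zt z0 * (((alpha * z0 i - zt i) * (alpha * z0 j - zt j)) / sigma ^ 4)
          - (if i = j then 1 else 0) * (g zt z0 / sigma ^ 2) := by
    intro z0
    have heq : (fun w => fderiv ℝ (fun w' => g w' z0) w (EuclideanSpace.single j 1))
        = fun w => g w z0 * ((alpha * z0 j - w j) / sigma ^ 2) :=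
      funext fun w => hGapp z0 w j
    rw [heq]
    have hlin : HasFDerivAt (fun w : EuclideanSpace ℝ (Fin d) => (alpha * z0 j - w j) / sigma ^ 2)
        (((sigma ^ 2)⁻¹ : ℝ) • (-(EuclideanSpace.proj j : EuclideanSpace ℝ (Fin d) →L[ℝ] ℝ))) zt := by
      have h0 := (EuclideanSpace.proj j : EuclideanSpace ℝ (Fin d) →L[ℝ] ℝ).hasFDerivAt (x := zt)
      have h1 := (h0.const_sub (alpha * z0 j)).const_mul ((sigma ^ 2)⁻¹ : ℝ)
      have heq2 : (fun w : EuclideanSpace ℝ (Fin d) => (alpha * z0 j - w j) / sigma ^ 2)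
          = fun w => ((sigma ^ 2)⁻¹ : ℝ) * (alpha * z0 j - w j) := by
        funext w; ring
      rw [heq2]; exact h1
    rw [((hG z0 zt).fun_mul hlin).fderiv]
    simp only [ContinuousLinearMap.add_apply, ContinuousLinearMap.smul_apply,
      ContinuousLinearMap.neg_apply, innerSL_apply_apply, smul_eq_mul]
    rw [show (inner ℝ (zt - alpha • z0) (EuclideanSpace.single i (1:ℝ)) : ℝ)
        = (zt - alpha • z0) i by
      rw [EuclideanSpace.inner_single_right]; simp]
    simp only [PiLp.sub_apply, PiLp.smul_apply, smul_eq_mul, PiLp.proj_apply,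
      EuclideanSpace.single_apply]
    by_cases hij : i = j
    · subst hij
      simp only [if_pos rfl]
      field_simp
      ring
    · have hji : ¬ (j = i) := fun h => hij h.symm
      simp only [if_neg hij, if_neg hji]
      field_simp
      ring
  -- second derivative of pt
  have hD2 : fderiv ℝ (fun w => fderiv ℝ pt w (EuclideanSpace.single j 1)) zt
      (EuclideanSpace.single i 1)
      = (alpha ^ 2 * C - alpha * zt j * A - alpha * zt i * B + zt i * zt j * P) / sigma ^ 4
        - (if i = j then 1 else 0) * (P / sigma ^ 2) := by
    rw [hder2]
    have heq : (fun z0 => p z0 *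
        fderiv ℝ (fun w => fderiv ℝ (fun w' => g w' z0) w (EuclideanSpace.single j 1)) zt
          (EuclideanSpace.single i 1))
        = fun z0 => (alpha ^ 2 / sigma ^ 4) * ((p z0 * g zt z0) * (z0 i * z0 j))
            - (alpha * zt j / sigma ^ 4) * ((p z0 * g zt z0) * z0 i)
            - (alpha * zt i / sigma ^ 4) * ((p z0 * g zt z0) * z0 j)
            + ((zt i * zt j) / sigma ^ 4 - (if i = j then 1 else 0) / sigma ^ 2)
              * (p z0 * g zt z0) := by
      funext z0; rw [hFval z0]; ring
    rw [heq]
    have I1 : Integrable (fun z0 => (alpha ^ 2 / sigma ^ 4) * ((p z0 * g zt z0) * (z0 i * z0 j))) :=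
      (hmom2 i j).const_mul _
    have I2 : Integrable (fun z0 => (alpha * zt j / sigma ^ 4) * ((p z0 * g zt z0) * z0 i)) :=
      (hmom1 i).const_mul _
    have I3 : Integrable (fun z0 => (alpha * zt i / sigma ^ 4) * ((p z0 * g zt z0) * z0 j)) :=
      (hmom1 j).const_mul _
    have I4 : Integrable (fun z0 => ((zt i * zt j) / sigma ^ 4
        - (if i = j then 1 else 0) / sigma ^ 2) * (p z0 * g zt z0)) := hPg.const_mul _
    have I12 : Integrable (fun z0 => (alpha ^ 2 / sigma ^ 4) * ((p z0 * g zt z0) * (z0 i * z0 j))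
        - (alpha * zt j / sigma ^ 4) * ((p z0 * g zt z0) * z0 i)) := I1.sub I2
    have I123 : Integrable (fun z0 =>
        (alpha ^ 2 / sigma ^ 4) * ((p z0 * g zt z0) * (z0 i * z0 j))
        - (alpha * zt j / sigma ^ 4) * ((p z0 * g zt z0) * z0 i)
        - (alpha * zt i / sigma ^ 4) * ((p z0 * g zt z0) * z0 j)) := I12.sub I3
    rw [integral_add I123 I4, integral_sub I12 I3, integral_sub I1 I2,
      integral_const_mul, integral_const_mul, integral_const_mul, integral_const_mul]
    rw [hA, hB, hC, hP, hpt zt]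
    ring
  -- log derivatives
  have hdpt : Differentiable ℝ pt := hsm.differentiable (by norm_num)
  have hlog1 : ∀ w, fderiv ℝ (fun w' => Real.log (pt w')) w
      = (pt w)⁻¹ • fderiv ℝ pt w := by
    intro w
    exact (((hdpt w).hasFDerivAt).log (ne_of_gt (hpos w))).fderiv
  have heqlog : (fun w => fderiv ℝ (fun w' => Real.log (pt w')) w (EuclideanSpace.single j 1))
      = fun w => (pt w)⁻¹ * fderiv ℝ pt w (EuclideanSpace.single j 1) := by
    funext w; rw [hlog1 w]; simp
  have hFj : DifferentiableAt ℝ (fun w => fderiv ℝ pt w (EuclideanSpace.single j 1)) zt := by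
    have h := (hsm.fderiv_right (m := 1) (by norm_num)).clm_apply
      (contDiff_const (c := EuclideanSpace.single j (1 : ℝ)))
    exact (h.differentiable (by norm_num)).differentiableAt
  have hinv : HasFDerivAt (fun w => (pt w)⁻¹) ((-((pt zt) ^ 2)⁻¹) • fderiv ℝ pt zt) zt :=
    (hasDerivAt_inv (ne_of_gt (hpos zt))).comp_hasFDerivAt zt (hdpt zt).hasFDerivAt
  have hHess : fderiv ℝ (fun w => fderiv ℝ (fun w' => Real.log (pt w')) w
      (EuclideanSpace.single j 1)) zt (EuclideanSpace.single i 1)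
      = P⁻¹ * (fderiv ℝ (fun w => fderiv ℝ pt w (EuclideanSpace.single j 1)) zt
            (EuclideanSpace.single i 1))
        + (fderiv ℝ pt zt (EuclideanSpace.single j 1))
          * (-(P ^ 2)⁻¹ * fderiv ℝ pt zt (EuclideanSpace.single i 1)) := by
    rw [heqlog, (hinv.fun_mul hFj.hasFDerivAt).fderiv]
    simp only [ContinuousLinearMap.add_apply, ContinuousLinearMap.smul_apply, smul_eq_mul,
      ContinuousLinearMap.neg_apply]
    rfl
  rw [hHess, hD2, hD1 i, hD1 j]
  have hα2 : alpha ^ 2 ≠ 0 := pow_ne_zero 2 hα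
  by_cases hij : i = j
  · simp only [if_pos hij]
    field_simp
    ring
  · simp only [if_neg hij]
    field_simp
    ring
end

section
/- (Continuity equation for the interpolant marginal) Let z_t = alpha(t) z0 + sigma(t) z1 with z0, z1 independent random vectors in R^d possessing smooth densities, alpha, sigma continuously differentiable, and let p_t denote the density of z_t. Define the velocity field v_t(z) = E[ alpha'(t) z0 + sigma'(t) z1 | z_t = z ]. Then p_t satisfies the continuity equation: partial_t p_t(z) + div_z ( p_t(z) v_t(z) ) = 0, in the weak (distributional) sense against smooth compactly supported test functions. -/
open MeasureTheory ProbabilityTheory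

lemma clm_pi_apply_eq_sum {d : ℕ} (L : (Fin d → ℝ) →L[ℝ] ℝ) (v : Fin d → ℝ) :
    L v = ∑ i, v i * L (Pi.single i 1) := by
  have h : v = ∑ i, v i • (Pi.single i (1:ℝ) : Fin d → ℝ) := by
    ext j
    simp [Finset.sum_apply, Pi.single_apply, eq_comm]
  conv_lhs => rw [h]
  rw [map_sum]
  simp [smul_eq_mul]

lemma condexp_pull_coord {Ω : Type*} {m mΩ : MeasurableSpace Ω} (hm_le : m ≤ mΩ)
    (μ : Measure Ω) [IsProbabilityMeasure μ] {d : ℕ} {W : Ω → Fin d → ℝ}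
    (hWi : Integrable W μ) {g : Ω → ℝ} (hg : StronglyMeasurable[m] g)
    {CD : ℝ} (hgb : ∀ ω, ‖g ω‖ ≤ CD) (i : Fin d) :
    ∫ ω, g ω * W ω i ∂μ = ∫ ω, g ω * (μ[W|m]) ω i ∂μ := by
  haveI : SigmaFinite (μ.trim hm_le) := by infer_instance
  have hVi : Integrable (μ[W|m]) μ := integrable_condExp
  have hWci : Integrable (fun ω => W ω i) μ :=
    (ContinuousLinearMap.proj (R := ℝ) (φ := fun _ : Fin d => ℝ) i).integrable_comp hWi
  have hVci : Integrable (fun ω => (μ[W|m]) ω i) μ :=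
    (ContinuousLinearMap.proj (R := ℝ) (φ := fun _ : Fin d => ℝ) i).integrable_comp hVi
  have hg_meas : AEStronglyMeasurable g μ := (hg.mono hm_le).aestronglyMeasurable
  -- coordinate condexp identification
  have hcoord : (fun ω => (μ[W|m]) ω i) =ᵐ[μ] μ[fun ω => W ω i|m] := by
    refine ae_eq_condExp_of_forall_setIntegral_eq hm_le hWci
      (fun s _ _ => hVci.integrableOn) (fun s hs hμs => ?_) ?_
    · have h1 : ∫ ω in s, (μ[W|m]) ω i ∂μ = (∫ ω in s, (μ[W|m]) ω ∂μ) i :=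
        (ContinuousLinearMap.proj (R := ℝ) (φ := fun _ : Fin d => ℝ) i).integral_comp_comm
          hVi.integrableOn
      have h2 : ∫ ω in s, W ω i ∂μ = (∫ ω in s, W ω ∂μ) i :=
        (ContinuousLinearMap.proj (R := ℝ) (φ := fun _ : Fin d => ℝ) i).integral_comp_comm
          hWi.integrableOn
      rw [h1, h2, setIntegral_condExp hm_le hWi hs]
    · exact ((continuous_apply i).comp_stronglyMeasurable
        stronglyMeasurable_condExp).aestronglyMeasurable
  have hgW_int : Integrable (fun ω => g ω * W ω i) μ :=
    hWci.bdd_mul (c := CD) hg_meas (Filter.Eventually.of_forall hgb)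
  have hpull : μ[(fun ω => g ω * W ω i)|m] =ᵐ[μ]
      fun ω => g ω * (μ[fun ω' => W ω' i|m]) ω :=
    condExp_mul_of_stronglyMeasurable_left hg hgW_int hWci
  calc ∫ ω, g ω * W ω i ∂μ = ∫ ω, (μ[(fun ω => g ω * W ω i)|m]) ω ∂μ :=
        (integral_condExp hm_le).symm
    _ = ∫ ω, g ω * (μ[fun ω' => W ω' i|m]) ω ∂μ := integral_congr_ae hpull
    _ = ∫ ω, g ω * (μ[W|m]) ω i ∂μ := by
        refine integral_congr_ae ?_
        filter_upwards [hcoord] with ω hω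
        rw [hω]

/-- Continuity equation for the interpolant marginal, weak form:
for `z_t = α(t) z0 + σ(t) z1` with `z0, z1` independent integrable random vectors and
`α, σ` continuously differentiable, and the velocity field
`v_t = E[α'(t) z0 + σ'(t) z1 | z_t]` (realized here as the conditional expectation `V`
given the σ-algebra generated by `z_t`), the marginal of `z_t` satisfies the continuity
equation `∂_t p_t + div(p_t v_t) = 0` weakly: for every smooth compactly supported test
function `φ`, `(d/dt) E[φ(z_t)] = E[Dφ(z_t)[v_t(z_t)]]`. -/
theorem stmt19 {Ω : Type*} [MeasurableSpace Ω] (μ : Measure Ω) [IsProbabilityMeasure μ]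
    {d : ℕ} (z0 z1 : Ω → (Fin d → ℝ))
    (hm0 : Measurable z0) (hm1 : Measurable z1)
    (hi0 : Integrable z0 μ) (hi1 : Integrable z1 μ)
    (hindep : IndepFun z0 z1 μ)
    (alpha sigma : ℝ → ℝ) (hca : ContDiff ℝ 1 alpha) (hcs : ContDiff ℝ 1 sigma)
    (t : ℝ) (φ : (Fin d → ℝ) → ℝ)
    (hφ : ContDiff ℝ (⊤ : ℕ∞) φ) (hφc : HasCompactSupport φ) :
    HasDerivAt (fun u : ℝ => ∫ ω, φ (alpha u • z0 ω + sigma u • z1 ω) ∂μ)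
      (∫ ω,
        fderiv ℝ φ (alpha t • z0 ω + sigma t • z1 ω)
          ((μ[(fun ω' => deriv alpha t • z0 ω' + deriv sigma t • z1 ω') |
              MeasurableSpace.comap (fun ω' => alpha t • z0 ω' + sigma t • z1 ω')
                inferInstance]) ω) ∂μ)
      t := by
  classical
  set zt : Ω → (Fin d → ℝ) := fun ω' => alpha t • z0 ω' + sigma t • z1 ω' with hztd
  set W : Ω → (Fin d → ℝ) := fun ω' => deriv alpha t • z0 ω' + deriv sigma t • z1 ω'
    with hWd
  have hzt_meas : Measurable zt := (hm0.const_smul (alpha t)).add (hm1.const_smul (sigma t))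
  have hW_meas : Measurable W :=
    (hm0.const_smul (deriv alpha t)).add (hm1.const_smul (deriv sigma t))
  have hm_le : MeasurableSpace.comap zt inferInstance ≤ ‹MeasurableSpace Ω› :=
    hzt_meas.comap_le
  have hWi : Integrable W μ :=
    (hi0.smul (𝕜 := ℝ) (deriv alpha t)).add (hi1.smul (𝕜 := ℝ) (deriv sigma t))
  -- continuity/boundedness facts about φ
  have hφcont : Continuous φ := hφ.continuous
  have hDcont : Continuous (fderiv ℝ φ) := hφ.continuous_fderiv (by simp)
  obtain ⟨Cφ, hCφ⟩ := hφcont.bounded_above_of_compact_support hφc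
  obtain ⟨CD, hCD⟩ := hDcont.bounded_above_of_compact_support (hφc.fderiv (𝕜 := ℝ))
  have hCD0 : 0 ≤ CD := le_trans (norm_nonneg _) (hCD 0)
  -- bounds on derivatives of alpha, sigma near t
  have hda : Continuous (deriv alpha) := hca.continuous_deriv le_rfl
  have hds : Continuous (deriv sigma) := hcs.continuous_deriv le_rfl
  obtain ⟨Aa, hAa⟩ := (isCompact_closedBall t 1).exists_bound_of_continuousOn
    hda.continuousOn
  obtain ⟨As, hAs⟩ := (isCompact_closedBall t 1).exists_bound_of_continuousOn
    hds.continuousOn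
  -- the pointwise derivative in u
  set F' : ℝ → Ω → ℝ := fun u ω =>
    fderiv ℝ φ (alpha u • z0 ω + sigma u • z1 ω)
      (deriv alpha u • z0 ω + deriv sigma u • z1 ω) with hF'd
  have h_diff : ∀ ω, ∀ u : ℝ,
      HasDerivAt (fun v => φ (alpha v • z0 ω + sigma v • z1 ω)) (F' u ω) u := by
    intro ω u
    have ha : HasDerivAt alpha (deriv alpha u) u :=
      ((hca.differentiable (by simp)) u).hasDerivAt
    have hs : HasDerivAt sigma (deriv sigma u) u :=
      ((hcs.differentiable (by simp)) u).hasDerivAt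
    have hg : HasDerivAt (fun v => alpha v • z0 ω + sigma v • z1 ω)
        (deriv alpha u • z0 ω + deriv sigma u • z1 ω) u :=
      (ha.smul_const (z0 ω)).add (hs.smul_const (z1 ω))
    have hφd : HasFDerivAt φ (fderiv ℝ φ (alpha u • z0 ω + sigma u • z1 ω))
        (alpha u • z0 ω + sigma u • z1 ω) :=
      ((hφ.differentiable (by simp)) _).hasFDerivAt
    exact hφd.comp_hasDerivAt u hg
  -- dominated derivative
  set bound : Ω → ℝ := fun ω => CD * (Aa * ‖z0 ω‖ + As * ‖z1 ω‖) with hbd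
  have hbound_int : Integrable bound μ :=
    (((hi0.norm.const_mul Aa).add (hi1.norm.const_mul As)).const_mul CD)
  have h_bound : ∀ᵐ ω ∂μ, ∀ u ∈ Metric.ball t 1, ‖F' u ω‖ ≤ bound ω := by
    refine Filter.Eventually.of_forall fun ω => fun u hu => ?_
    have hu' : u ∈ Metric.closedBall t 1 := Metric.ball_subset_closedBall hu
    have h1 : ‖F' u ω‖ ≤ ‖fderiv ℝ φ (alpha u • z0 ω + sigma u • z1 ω)‖ *
        ‖deriv alpha u • z0 ω + deriv sigma u • z1 ω‖ :=
      ContinuousLinearMap.le_opNorm _ _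
    refine h1.trans ?_
    have h2 : ‖deriv alpha u • z0 ω + deriv sigma u • z1 ω‖ ≤
        Aa * ‖z0 ω‖ + As * ‖z1 ω‖ := by
      refine (norm_add_le _ _).trans ?_
      rw [norm_smul, norm_smul]
      gcongr
      · exact hAa u hu'
      · exact hAs u hu'
    calc ‖fderiv ℝ φ (alpha u • z0 ω + sigma u • z1 ω)‖ *
          ‖deriv alpha u • z0 ω + deriv sigma u • z1 ω‖
        ≤ CD * (Aa * ‖z0 ω‖ + As * ‖z1 ω‖) :=
          mul_le_mul (hCD _) h2 (norm_nonneg _) hCD0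
      _ = bound ω := rfl
  have hF_meas : ∀ᶠ u in nhds t, AEStronglyMeasurable
      (fun ω => φ (alpha u • z0 ω + sigma u • z1 ω)) μ := by
    refine Filter.Eventually.of_forall fun u => ?_
    exact (hφcont.measurable.comp ((hm0.const_smul (alpha u)).add
      (hm1.const_smul (sigma u)))).aestronglyMeasurable
  have hF_int : Integrable (fun ω => φ (alpha t • z0 ω + sigma t • z1 ω)) μ := by
    refine Integrable.mono' (integrable_const Cφ)
      ((hφcont.measurable.comp hzt_meas).aestronglyMeasurable) ?_
    exact Filter.Eventually.of_forall fun ω => hCφ _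
  have hF'_meas : AEStronglyMeasurable (F' t) μ := by
    have h1 : AEStronglyMeasurable (fun ω => fderiv ℝ φ (zt ω)) μ :=
      hDcont.comp_aestronglyMeasurable hzt_meas.aestronglyMeasurable
    have h2 : AEStronglyMeasurable W μ := hW_meas.aestronglyMeasurable
    exact (isBoundedBilinearMap_apply.continuous).comp_aestronglyMeasurable
      (h1.prodMk h2)
  obtain ⟨hF'_int, hderiv⟩ :=
    hasDerivAt_integral_of_dominated_loc_of_deriv_le (μ := μ) (Metric.ball_mem_nhds t zero_lt_one) hF_meas hF_int
      hF'_meas h_bound hbound_int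
      (Filter.Eventually.of_forall fun ω => fun u _ => h_diff ω u)
  -- identify the derivative with the conditional-expectation form
  have key : ∫ ω, F' t ω ∂μ =
      ∫ ω, fderiv ℝ φ (zt ω)
        ((μ[W|MeasurableSpace.comap zt inferInstance]) ω) ∂μ := by
    set V : Ω → (Fin d → ℝ) := μ[W|MeasurableSpace.comap zt inferInstance] with hVd
    have hVi : Integrable V μ := integrable_condExp
    set g : Fin d → Ω → ℝ := fun i ω => fderiv ℝ φ (zt ω) (Pi.single i 1) with hgd
    have hg_bdd : ∀ i ω, ‖g i ω‖ ≤ CD := by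
      intro i ω
      refine (ContinuousLinearMap.le_opNorm _ _).trans ?_
      have hsn : ‖(Pi.single i 1 : Fin d → ℝ)‖ ≤ 1 := by
        rw [pi_norm_le_iff_of_nonneg zero_le_one]
        intro j
        rcases eq_or_ne j i with h | h
        · simp [h, Pi.single_apply]
        · simp [Pi.single_apply, h]
      calc ‖fderiv ℝ φ (zt ω)‖ * ‖(Pi.single i 1 : Fin d → ℝ)‖ ≤ CD * 1 :=
            mul_le_mul (hCD _) hsn (norm_nonneg _) hCD0
        _ = CD := mul_one CD
    have hg_sm : ∀ i, StronglyMeasurable[MeasurableSpace.comap zt inferInstance] (g i) := by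
      intro i
      have hzt_m : Measurable[MeasurableSpace.comap zt inferInstance] zt :=
        Measurable.of_comap_le le_rfl
      have hcont : Continuous (fun z : Fin d → ℝ => fderiv ℝ φ z (Pi.single i 1)) :=
        (isBoundedBilinearMap_apply.continuous).comp
          (hDcont.prodMk continuous_const)
      exact (hcont.measurable.comp hzt_m).stronglyMeasurable
    have hg_meas : ∀ i, AEStronglyMeasurable (g i) μ := fun i =>
      (((hg_sm i).mono hm_le)).aestronglyMeasurable
    have hWci : ∀ i, Integrable (fun ω => W ω i) μ := fun i =>
      (ContinuousLinearMap.proj (R := ℝ) (φ := fun _ : Fin d => ℝ) i).integrable_comp hWi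
    have hVci : ∀ i, Integrable (fun ω => V ω i) μ := fun i =>
      (ContinuousLinearMap.proj (R := ℝ) (φ := fun _ : Fin d => ℝ) i).integrable_comp hVi
    have hexp : ∀ (U : Ω → Fin d → ℝ), (∀ i, Integrable (fun ω => U ω i) μ) →
        ∫ ω, fderiv ℝ φ (zt ω) (U ω) ∂μ = ∑ i, ∫ ω, g i ω * U ω i ∂μ := by
      intro U hU
      have h1 : ∀ ω, fderiv ℝ φ (zt ω) (U ω) = ∑ i, g i ω * U ω i := by
        intro ω
        rw [clm_pi_apply_eq_sum]
        exact Finset.sum_congr rfl fun i _ => mul_comm _ _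
      simp_rw [h1]
      rw [integral_finset_sum]
      intro i _
      exact (hU i).bdd_mul (c := CD) (hg_meas i) (Filter.Eventually.of_forall fun ω => hg_bdd i ω)
    calc ∫ ω, F' t ω ∂μ = ∫ ω, fderiv ℝ φ (zt ω) (W ω) ∂μ := rfl
      _ = ∑ i, ∫ ω, g i ω * W ω i ∂μ := hexp W hWci
      _ = ∑ i, ∫ ω, g i ω * V ω i ∂μ := by
          refine Finset.sum_congr rfl fun i _ => ?_
          exact condexp_pull_coord hm_le μ hWi (hg_sm i) (fun ω => hg_bdd i ω) i
      _ = ∫ ω, fderiv ℝ φ (zt ω) (V ω) ∂μ := (hexp V hVci).symm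
  rw [← key]
  exact hderiv
end
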